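/- Let P(λ) be an n×n matrix polynomial with nonsingular leading coefficient, μ ∉ σ(P), and let δ = s_n(μ)/w(|μ|), where s_n(μ) is the smallest singular value of P(μ). Then (a) there exists Q(λ) = Σ(P_j + Δ_j)λ^j with ‖Δ_j‖ ≤ δ w_j for all j and det Q(μ) = 0; and (b) for every ε < δ, no Q(λ) = Σ(P_j + Δ_j)λ^j with ‖Δ_j‖ ≤ ε w_j for all j satisfies det Q(μ) = 0. -/

import Mathlib

/-!
Write `A = P(μ)` and `s = s_n(A)`. Because `‖A x‖ ≥ s ‖x‖`, no matrix `M` with `‖M‖ < s` makes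
`A + M` singular, and `‖Σ μ^j Δ_j‖ ≤ ε w(|μ|) < s` whenever `‖Δ_j‖ ≤ ε w_j`. For sharpness, take a
unit vector `v` with `‖A v‖ = s`: the rank-one matrix `E = -(A v) v*` has norm `s` and
`(A + E) v = 0`. It is realised as `Σ μ^j Δ_j` by `Δ_j = (w_j / w(|μ|)) (conj μ / |μ|)^j E`,
since `μ^j (conj μ / |μ|)^j = |μ|^j`, and then `‖Δ_j‖ ≤ δ w_j`.
-/

open Matrix Finset

/-- The singular values of a complex `N × N` matrix, arranged in decreasing order:
`svals A 0 ≥ svals A 1 ≥ ... ≥ svals A (N-1)`; that is, `svals A ⟨j-1,_⟩` is the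
paper's `s_j(A)`, the nonnegative square roots of the eigenvalues of `Aᴴ * A`. -/
noncomputable def svals {N : ℕ} (A : Matrix (Fin N) (Fin N) ℂ) : Fin N → ℝ :=
  fun i =>
    Real.sqrt ((Matrix.isHermitian_conjTranspose_mul_self A).eigenvalues
      (Tuple.sort ((Matrix.isHermitian_conjTranspose_mul_self A).eigenvalues) i.rev))

/-- The smallest singular value `s_n(A)` of a complex `(N+1) × (N+1)` matrix. -/
noncomputable def sMin {N : ℕ} (A : Matrix (Fin (N + 1)) (Fin (N + 1)) ℂ) : ℝ :=
  svals A (Fin.last N)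

/-- The spectral norm of a matrix: the operator norm induced by the Euclidean vector norm. -/
noncomputable def specNorm {N : ℕ} (A : Matrix (Fin N) (Fin N) ℂ) : ℝ :=
  ‖Matrix.toEuclideanCLM (𝕜 := ℂ) A‖

/-- Euclidean norm of a vector in `ℂ^N`. -/
noncomputable def enorm' {N : ℕ} (x : Fin N → ℂ) : ℝ :=
  ‖(WithLp.equiv 2 (Fin N → ℂ)).symm x‖

/-- Evaluation of the matrix polynomial `P(z) = Σ_{j=0}^m P_j z^j`. -/
noncomputable def polyEval {N m : ℕ} (P : Fin (m + 1) → Matrix (Fin N) (Fin N) ℂ) (z : ℂ) :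
    Matrix (Fin N) (Fin N) ℂ :=
  ∑ j : Fin (m + 1), z ^ (j : ℕ) • P j

/-- Evaluation of the derivative `P'(z) = Σ_{j=1}^m j P_j z^{j-1}`. -/
noncomputable def polyDerivEval {N m : ℕ} (P : Fin (m + 1) → Matrix (Fin N) (Fin N) ℂ)
    (z : ℂ) : Matrix (Fin N) (Fin N) ℂ :=
  ∑ j : Fin (m + 1), (((j : ℕ) : ℂ) * z ^ ((j : ℕ) - 1)) • P j

/-- Evaluation of the weight polynomial `w(x) = Σ_{j=0}^m w_j x^j`. -/
noncomputable def wEval {m : ℕ} (w : Fin (m + 1) → ℝ) (x : ℝ) : ℝ :=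
  ∑ j : Fin (m + 1), w j * x ^ (j : ℕ)

section
variable {𝕜 ι : Type*} [RCLike 𝕜] [Fintype ι] [DecidableEq ι] (A : Matrix ι ι 𝕜)

theorem Matrix.toEuclideanCLM_conjTranspose_mul_self_eigenvectorBasis (i : ι) :
    toEuclideanCLM (𝕜 := 𝕜) (Aᴴ * A) ((isHermitian_conjTranspose_mul_self A).eigenvectorBasis i) =
      ((isHermitian_conjTranspose_mul_self A).eigenvalues i : 𝕜) •
        (isHermitian_conjTranspose_mul_self A).eigenvectorBasis i := by
  apply WithLp.ofLp_injective
  rw [ofLp_toEuclideanCLM, (isHermitian_conjTranspose_mul_self A).mulVec_eigenvectorBasis,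
    RCLike.real_smul_eq_coe_smul (K := 𝕜)]
  rfl

theorem Matrix.norm_toEuclideanCLM_apply_sq (x : EuclideanSpace 𝕜 ι) :
    ‖toEuclideanCLM (𝕜 := 𝕜) A x‖ ^ 2 =
      ∑ i, (isHermitian_conjTranspose_mul_self A).eigenvalues i *
        ‖inner 𝕜 ((isHermitian_conjTranspose_mul_self A).eigenvectorBasis i) x‖ ^ 2 := by
  set b := (isHermitian_conjTranspose_mul_self A).eigenvectorBasis
  have hT : toEuclideanCLM (𝕜 := 𝕜) (Aᴴ * A) =
      (toEuclideanCLM (𝕜 := 𝕜) A).adjoint * toEuclideanCLM (𝕜 := 𝕜) A := by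
    rw [map_mul, ← star_eq_conjTranspose, map_star, ContinuousLinearMap.star_eq_adjoint]
  have hinner (i : ι) : inner 𝕜 (b i) (toEuclideanCLM (𝕜 := 𝕜) (Aᴴ * A) x) =
      ((isHermitian_conjTranspose_mul_self A).eigenvalues i : 𝕜) * inner 𝕜 (b i) x := by
    have hsymm := ((isHermitian_conjTranspose_mul_self A).isSelfAdjoint.map
      (toEuclideanCLM (𝕜 := 𝕜) (n := ι))).isSymmetric (b i) x
    rw [ContinuousLinearMap.coe_coe, toEuclideanCLM_conjTranspose_mul_self_eigenvectorBasis,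
      inner_smul_left, RCLike.conj_ofReal] at hsymm
    exact hsymm.symm
  rw [← RCLike.ofReal_inj (K := 𝕜), RCLike.ofReal_pow, ← inner_self_eq_norm_sq_to_K,
    ← ContinuousLinearMap.adjoint_inner_right, ← mul_apply_eq_comp, ← hT,
    ← b.sum_inner_mul_inner, RCLike.ofReal_sum]
  refine Finset.sum_congr rfl fun i _ => ?_
  rw [hinner, ← inner_conj_symm, RCLike.ofReal_mul, RCLike.ofReal_pow, ← RCLike.mul_conj]
  ring

theorem Matrix.norm_toEuclideanCLM_eigenvectorBasis_sq (i : ι) :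
    ‖toEuclideanCLM (𝕜 := 𝕜) A ((isHermitian_conjTranspose_mul_self A).eigenvectorBasis i)‖ ^ 2 =
      (isHermitian_conjTranspose_mul_self A).eigenvalues i := by
  simp [norm_toEuclideanCLM_apply_sq, OrthonormalBasis.inner_eq_ite, apply_ite]

end

section
variable {N : ℕ} (A : Matrix (Fin (N + 1)) (Fin (N + 1)) ℂ)

theorem sMin_nonneg : 0 ≤ sMin A := Real.sqrt_nonneg _

theorem sMin_sq : sMin A ^ 2 = (isHermitian_conjTranspose_mul_self A).eigenvalues
    (Tuple.sort (isHermitian_conjTranspose_mul_self A).eigenvalues 0) := by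
  rw [sMin, svals, Fin.rev_last, Real.sq_sqrt (eigenvalues_conjTranspose_mul_self_nonneg A _)]

theorem sMin_sq_le_eigenvalues (i : Fin (N + 1)) :
    sMin A ^ 2 ≤ (isHermitian_conjTranspose_mul_self A).eigenvalues i := by
  rw [sMin_sq]
  simpa using Tuple.monotone_sort (isHermitian_conjTranspose_mul_self A).eigenvalues
    (Fin.zero_le ((Tuple.sort (isHermitian_conjTranspose_mul_self A).eigenvalues).symm i))

theorem sMin_mul_norm_le_norm_toEuclideanCLM_apply (x : EuclideanSpace ℂ (Fin (N + 1))) :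
    sMin A * ‖x‖ ≤ ‖toEuclideanCLM (𝕜 := ℂ) A x‖ := by
  refine (pow_le_pow_iff_left₀ (by positivity [sMin_nonneg A]) (norm_nonneg _) two_ne_zero).1 ?_
  rw [mul_pow, norm_toEuclideanCLM_apply_sq,
    ← (isHermitian_conjTranspose_mul_self A).eigenvectorBasis.sum_sq_norm_inner_right, mul_sum]
  gcongr with i
  exact sMin_sq_le_eigenvalues A i

theorem exists_norm_eq_one_norm_toEuclideanCLM_apply_eq_sMin :
    ∃ v : EuclideanSpace ℂ (Fin (N + 1)), ‖v‖ = 1 ∧ ‖toEuclideanCLM (𝕜 := ℂ) A v‖ = sMin A := by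
  set b := (isHermitian_conjTranspose_mul_self A).eigenvectorBasis
  set i := Tuple.sort (isHermitian_conjTranspose_mul_self A).eigenvalues 0
  refine ⟨b i, b.orthonormal.1 i, ?_⟩
  rw [← pow_left_inj₀ (norm_nonneg _) (sMin_nonneg A) two_ne_zero, sMin_sq,
    norm_toEuclideanCLM_eigenvectorBasis_sq]

end

theorem Matrix.det_eq_zero_iff_exists_toEuclideanCLM_apply_eq_zero {𝕜 ι : Type*} [RCLike 𝕜]
    [Fintype ι] [DecidableEq ι] (A : Matrix ι ι 𝕜) :
    A.det = 0 ↔ ∃ x ≠ 0, toEuclideanCLM (𝕜 := 𝕜) A x = 0 := by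
  rw [← exists_mulVec_eq_zero_iff]
  constructor
  · rintro ⟨v, hv, hAv⟩
    exact ⟨WithLp.toLp 2 v, by simpa using hv, by simp [hAv]⟩
  · rintro ⟨x, hx, hAx⟩
    exact ⟨x.ofLp, by simpa using hx, by simpa using congrArg WithLp.ofLp hAx⟩

section SpecNorm
variable {N : ℕ}

theorem specNorm_smul (c : ℂ) (A : Matrix (Fin N) (Fin N) ℂ) :
    specNorm (c • A) = ‖c‖ * specNorm A := by
  rw [specNorm, specNorm, map_smul, norm_smul]

theorem specNorm_sum_le {ι : Type*} (s : Finset ι) (A : ι → Matrix (Fin N) (Fin N) ℂ) :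
    specNorm (∑ i ∈ s, A i) ≤ ∑ i ∈ s, specNorm (A i) := by
  simpa only [specNorm, map_sum] using norm_sum_le s _

theorem norm_toEuclideanCLM_apply_le_specNorm_mul (A : Matrix (Fin N) (Fin N) ℂ)
    (x : EuclideanSpace ℂ (Fin N)) : ‖toEuclideanCLM (𝕜 := ℂ) A x‖ ≤ specNorm A * ‖x‖ :=
  (toEuclideanCLM (𝕜 := ℂ) A).le_opNorm x

theorem exists_specNorm_eq_det_add_eq_zero (A : Matrix (Fin N) (Fin N) ℂ)
    {v : EuclideanSpace ℂ (Fin N)} (hv : ‖v‖ = 1) :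
    ∃ E, specNorm E = ‖toEuclideanCLM (𝕜 := ℂ) A v‖ ∧ (A + E).det = 0 := by
  refine ⟨(toEuclideanCLM (𝕜 := ℂ)).symm
    (-InnerProductSpace.rankOne ℂ (toEuclideanCLM (𝕜 := ℂ) A v) v), ?_, ?_⟩
  · rw [specNorm, StarAlgEquiv.apply_symm_apply, norm_neg, InnerProductSpace.norm_rankOne, hv,
      mul_one]
  · rw [det_eq_zero_iff_exists_toEuclideanCLM_apply_eq_zero]
    refine ⟨v, norm_ne_zero_iff.1 (by simp [hv]), ?_⟩
    rw [map_add, StarAlgEquiv.apply_symm_apply, _root_.add_apply, _root_.neg_apply,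
      InnerProductSpace.rankOne_apply, inner_self_eq_norm_sq_to_K, hv]
    simp

end SpecNorm

theorem det_add_ne_zero_of_specNorm_lt_sMin {N : ℕ} {A M : Matrix (Fin (N + 1)) (Fin (N + 1)) ℂ}
    (h : specNorm M < sMin A) : (A + M).det ≠ 0 := by
  rw [Ne, det_eq_zero_iff_exists_toEuclideanCLM_apply_eq_zero]
  rintro ⟨x, hx, hAMx⟩
  rw [map_add, _root_.add_apply, add_eq_zero_iff_eq_neg] at hAMx
  have : sMin A * ‖x‖ ≤ specNorm M * ‖x‖ :=
    calc sMin A * ‖x‖ ≤ ‖toEuclideanCLM (𝕜 := ℂ) A x‖ :=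
          sMin_mul_norm_le_norm_toEuclideanCLM_apply A x
      _ = ‖toEuclideanCLM (𝕜 := ℂ) M x‖ := by rw [hAMx, norm_neg]
      _ ≤ specNorm M * ‖x‖ := norm_toEuclideanCLM_apply_le_specNorm_mul M x
  exact (mul_lt_mul_of_pos_right h (norm_pos_iff.2 hx)).not_ge this

section MatrixPolynomial
variable {N m : ℕ}
open ComplexConjugate

theorem sum_pow_smul_add (P Δ : Fin (m + 1) → Matrix (Fin N) (Fin N) ℂ) (z : ℂ) :
    ∑ j : Fin (m + 1), z ^ (j : ℕ) • (P j + Δ j) = polyEval P z + polyEval Δ z := by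
  simp only [polyEval, smul_add, sum_add_distrib]

theorem wEval_pos {w : Fin (m + 1) → ℝ} (hw : ∀ j, 0 ≤ w j) (hw0 : 0 < w 0) {x : ℝ}
    (hx : 0 ≤ x) : 0 < wEval w x :=
  sum_pos' (fun j _ => mul_nonneg (hw j) (pow_nonneg hx _)) ⟨0, mem_univ _, by simpa using hw0⟩

theorem specNorm_polyEval_le {Δ : Fin (m + 1) → Matrix (Fin N) (Fin N) ℂ} {w : Fin (m + 1) → ℝ}
    {ε : ℝ} (hΔ : ∀ j, specNorm (Δ j) ≤ ε * w j) (z : ℂ) :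
    specNorm (polyEval Δ z) ≤ ε * wEval w ‖z‖ := by
  rw [wEval, mul_sum]
  refine (specNorm_sum_le _ _).trans (sum_le_sum fun j _ => ?_)
  rw [specNorm_smul, norm_pow]
  exact (mul_le_mul_of_nonneg_left (hΔ j) (by positivity)).trans_eq (by ring)

theorem Complex.mul_conj_div_norm (z : ℂ) : z * (conj z / ‖z‖) = ‖z‖ := by
  rw [mul_div_assoc', Complex.mul_conj, Complex.normSq_eq_norm_sq, Complex.ofReal_pow, sq,
    mul_self_div_self]

theorem Complex.norm_conj_div_norm_le_one (z : ℂ) : ‖conj z / ‖z‖‖ ≤ 1 := by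
  rw [norm_div, Complex.norm_conj, Complex.norm_real, norm_norm]
  exact div_self_le_one _

theorem exists_polyEval_eq_and_specNorm_le {w : Fin (m + 1) → ℝ} (hw : ∀ j, 0 ≤ w j) {z : ℂ}
    (hz : 0 < wEval w ‖z‖) (E : Matrix (Fin N) (Fin N) ℂ) :
    ∃ Δ : Fin (m + 1) → Matrix (Fin N) (Fin N) ℂ,
      (∀ j, specNorm (Δ j) ≤ specNorm E / wEval w ‖z‖ * w j) ∧ polyEval Δ z = E := by
  refine ⟨fun j => ((w j / wEval w ‖z‖ : ℝ) * (conj z / ‖z‖) ^ (j : ℕ) : ℂ) • E,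
    fun j => ?_, ?_⟩
  · rw [specNorm_smul, norm_mul, Complex.norm_real, norm_pow, Real.norm_eq_abs,
      abs_of_nonneg (div_nonneg (hw j) hz.le)]
    calc w j / wEval w ‖z‖ * ‖conj z / ‖z‖‖ ^ (j : ℕ) * specNorm E
        ≤ w j / wEval w ‖z‖ * 1 * specNorm E := by
          have hφ := pow_le_one₀ (norm_nonneg _) (Complex.norm_conj_div_norm_le_one z) (n := j)
          have := div_nonneg (hw j) hz.le
          gcongr
          exact norm_nonneg _
      _ = specNorm E / wEval w ‖z‖ * w j := by ring
  · have hterm (j : Fin (m + 1)) :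
        z ^ (j : ℕ) * ((w j / wEval w ‖z‖ : ℝ) * (conj z / ‖z‖) ^ (j : ℕ)) =
          ((w j * ‖z‖ ^ (j : ℕ) / wEval w ‖z‖ : ℝ) : ℂ) := by
      rw [mul_left_comm, ← mul_pow, Complex.mul_conj_div_norm]
      push_cast
      ring
    rw [polyEval]
    simp only [smul_smul, ← sum_smul, hterm, ← Complex.ofReal_sum, ← sum_div]
    rw [← wEval, div_self hz.ne', Complex.ofReal_one, one_smul]

end MatrixPolynomial

theorem stmt12_general {n m : ℕ} (P : Fin (m + 1) → Matrix (Fin (n + 1)) (Fin (n + 1)) ℂ)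
    (w : Fin (m + 1) → ℝ) (hw : ∀ j, 0 ≤ w j) (hw0 : 0 < w 0)
    (μ : ℂ) :
    (∃ Δ : Fin (m + 1) → Matrix (Fin (n + 1)) (Fin (n + 1)) ℂ,
        (∀ j, specNorm (Δ j) ≤
          (sMin (polyEval P μ) / wEval w ‖μ‖) * w j) ∧
          (∑ j : Fin (m + 1), μ ^ (j : ℕ) • (P j + Δ j)).det = 0) ∧
      ∀ ε : ℝ, ε < sMin (polyEval P μ) / wEval w ‖μ‖ →
        ∀ Δ : Fin (m + 1) → Matrix (Fin (n + 1)) (Fin (n + 1)) ℂ,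
          (∀ j, specNorm (Δ j) ≤ ε * w j) →
            (∑ j : Fin (m + 1), μ ^ (j : ℕ) • (P j + Δ j)).det ≠ 0 := by
  have hW : 0 < wEval w ‖μ‖ := wEval_pos hw hw0 (norm_nonneg μ)
  refine ⟨?_, fun ε hε Δ hΔ => ?_⟩
  · obtain ⟨v, hv, hAv⟩ := exists_norm_eq_one_norm_toEuclideanCLM_apply_eq_sMin (polyEval P μ)
    obtain ⟨E, hE, hdet⟩ := exists_specNorm_eq_det_add_eq_zero (polyEval P μ) hv
    obtain ⟨Δ, hΔ, hΔμ⟩ := exists_polyEval_eq_and_specNorm_le hw hW E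
    refine ⟨Δ, fun j => (hΔ j).trans_eq (by rw [hE, hAv]), ?_⟩
    rw [sum_pow_smul_add, hΔμ, hdet]
  · rw [sum_pow_smul_add]
    refine det_add_ne_zero_of_specNorm_lt_sMin ?_
    calc specNorm (polyEval Δ μ) ≤ ε * wEval w ‖μ‖ := specNorm_polyEval_le hΔ μ
      _ < sMin (polyEval P μ) / wEval w ‖μ‖ * wEval w ‖μ‖ := by gcongr
      _ = sMin (polyEval P μ) := div_mul_cancel₀ _ hW.ne'

/-- For `μ ∉ σ(P)` and `δ = s_n(P(μ))/w(|μ|)`: (a) some perturbation of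
size `δ` has `μ` as an eigenvalue; (b) no perturbation of size `ε < δ` does. -/
theorem stmt12 {n m : ℕ} (P : Fin (m + 1) → Matrix (Fin (n + 1)) (Fin (n + 1)) ℂ)
    (hPm : (P (Fin.last m)).det ≠ 0)
    (w : Fin (m + 1) → ℝ) (hw : ∀ j, 0 ≤ w j) (hw0 : 0 < w 0)
    (μ : ℂ) (hμ : (polyEval P μ).det ≠ 0) :
    (∃ Δ : Fin (m + 1) → Matrix (Fin (n + 1)) (Fin (n + 1)) ℂ,
        (∀ j, specNorm (Δ j) ≤
          (sMin (polyEval P μ) / wEval w ‖μ‖) * w j) ∧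
          (∑ j : Fin (m + 1), μ ^ (j : ℕ) • (P j + Δ j)).det = 0) ∧
      ∀ ε : ℝ, ε < sMin (polyEval P μ) / wEval w ‖μ‖ →
        ∀ Δ : Fin (m + 1) → Matrix (Fin (n + 1)) (Fin (n + 1)) ℂ,
          (∀ j, specNorm (Δ j) ≤ ε * w j) →
            (∑ j : Fin (m + 1), μ ^ (j : ℕ) • (P j + Δ j)).det ≠ 0 :=
  stmt12_general P w hw hw0 μ
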